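/- Let m ≥ 2 and let (a,b) ∈ F_{2^m} × F_{2^m} with (a,b) ≠ (0,0). Then the weight wt(c(a,b)) = #{(x,y) ∈ D_3 : Tr(axy + bx) = 1} satisfies: wt(c(a,b)) = 2^{m−2}(2^m − 1) if a ∉ {0,1} and Tr((a+1)b) = 0; wt(c(a,b)) = 2^{2m−2} if a = 1, or if a = 0, b ≠ 0 and Tr(b) = 0; wt(c(a,b)) = 2^{m−2}(2^m + 1) if a ∉ {0,1} and Tr((a+1)b) = 1; and wt(c(a,b)) = 2^{m−1}(2^{m−1} + 1) if a = 0, b ≠ 0 and Tr(b) = 1. -/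

import Mathlib

attribute [local instance] Classical.propDecidable

noncomputable instance (m : ℕ) : Fintype (GaloisField 2 m) := Fintype.ofFinite _

/-- The absolute trace map from `F_{2^m}` to `F_2`. -/
noncomputable def Tr (m : ℕ) (x : GaloisField 2 m) : ZMod 2 :=
  Algebra.trace (ZMod 2) (GaloisField 2 m) x

/-- For `t ∈ F_2`, `sgn t` is the integer `(-1)^t`. -/
def sgn : ZMod 2 → ℤ := fun t => if t = 0 then 1 else -1

/-- The set `Υ₁ = {r + r⁻¹ : r ∈ F_{2^m}^*, r ≠ 1}`. -/
def Ups1 (m : ℕ) : Set (GaloisField 2 m) :=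
  {u | ∃ r : GaloisField 2 m, r ≠ 0 ∧ r ≠ 1 ∧ u = r + r⁻¹}

/-!
Summing over `x` first, `wt = ∑ₓ #{y | Tr((x² + x) y) = 0 ∧ Tr(a x y + b x) = 1}`.
With `χ(z) = (-1)^{Tr z}` the indicator of the inner condition is
`(1 + χ((x² + x) y)) (1 - χ(b x) χ(a x y)) / 4`, and orthogonality `∑_y χ(c y) = q [c = 0]`
leaves only the `x` with `x² + x = 0`, `a x = 0` or `x² + x + a x = 0`, i.e. `x ∈ {0, 1, a + 1}`
(all `x` when `a = 0`). This gives
`4 wt = q (q + 1 - [a = 0] q [b = 0] - [a ≠ 0] - [a ≠ 1] χ((a + 1) b))`,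
which contains all four cases.
-/

open Finset

@[simp] lemma sgn_zero : sgn 0 = 1 := rfl

@[simp] lemma sgn_one : sgn 1 = -1 := rfl

lemma sgn_add (s t : ZMod 2) : sgn (s + t) = sgn s * sgn t := by
  revert s t; decide

lemma four_mul_ite_eq_zero_and_eq_one (s t : ZMod 2) :
    4 * (if s = 0 ∧ t = 1 then 1 else 0 : ℤ) = (1 + sgn s) * (1 - sgn t) := by
  revert s t; decide

lemma sum_ite_mul_add_eq_zero {K M : Type*} [CommRing K] [IsDomain K] [Fintype K] [AddCommMonoid M]
    (c : K) (g : K → M) :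
    ∑ x, (if x * (x + c) = 0 then g x else 0) = g 0 + if c = 0 then 0 else g (-c) := by
  have hroots : ({x | x * (x + c) = 0} : Finset K) = {0, -c} := by
    ext x; simp [add_eq_zero_iff_eq_neg]
  rw [← sum_filter, hroots]
  by_cases hc : c = 0
  · simp [hc]
  · rw [sum_pair (by simpa using hc), if_neg hc]

section

variable (L : Type*) [Field L] [Algebra (ZMod 2) L]

local notation "tr" => Algebra.trace (ZMod 2) L

noncomputable def traceChar : AddChar L ℤ where
  toFun y := sgn (tr y)
  map_zero_eq_one' := by simp
  map_add_eq_mul' x y := by rw [map_add, sgn_add]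

variable {L}

lemma traceChar_apply (y : L) : traceChar L y = sgn (tr y) := rfl

variable [Fintype L]

lemma traceChar_isPrimitive : (traceChar L).IsPrimitive := by
  intro c hc h
  obtain ⟨z, hz⟩ := Algebra.trace_surjective (ZMod 2) L 1
  have := congr($h (z / c))
  simp [traceChar_apply, mul_div_cancel₀ z hc, hz] at this

lemma sum_traceChar_mul (c : L) :
    ∑ y, traceChar L (c * y) = if c = 0 then (Fintype.card L : ℤ) else 0 := by
  simp_rw [mul_comm c]
  exact_mod_cast AddChar.sum_mulShift c traceChar_isPrimitive

lemma four_mul_card_trace_eq_zero_and_eq_one (u v w : L) :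
    4 * (#{y | tr (u * y) = 0 ∧ tr (v * y + w) = 1} : ℤ) =
      Fintype.card L + (if u = 0 then (Fintype.card L : ℤ) else 0) -
        traceChar L w * ((if v = 0 then (Fintype.card L : ℤ) else 0) +
          (if u + v = 0 then (Fintype.card L : ℤ) else 0)) := by
  calc 4 * (#{y | tr (u * y) = 0 ∧ tr (v * y + w) = 1} : ℤ)
      = ∑ y, (1 + traceChar L (u * y)) * (1 - traceChar L (v * y + w)) := by
        rw [natCast_card_filter, mul_sum]
        exact sum_congr rfl fun y _ => four_mul_ite_eq_zero_and_eq_one _ _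
    _ = ∑ y, (1 + traceChar L (u * y) - traceChar L w * traceChar L (v * y) -
          traceChar L w * traceChar L ((u + v) * y)) := by
        refine sum_congr rfl fun y _ => ?_
        rw [AddChar.map_add_eq_mul, add_mul u v, AddChar.map_add_eq_mul]
        ring
    _ = _ := by
        simp only [sum_add_distrib, sum_sub_distrib, ← mul_sum, sum_traceChar_mul, sum_const,
          card_univ, nsmul_eq_mul, mul_one]
        ring

/-- The Hamming weight of the codeword `c(a, b)` of `C_{D₃}`. -/
noncomputable def weight (a b : L) : ℕ :=
  #{p : L × L | p.1 ≠ 0 ∧ tr (p.2 * p.1 ^ 2 + p.1 * p.2) = 0 ∧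
    tr (a * p.1 * p.2 + b * p.1) = 1}

lemma weight_eq_sum_card (a b : L) :
    weight a b = ∑ x, #{y | tr ((x ^ 2 + x) * y) = 0 ∧ tr ((a * x) * y + b * x) = 1} := by
  rw [weight, card_filter, Fintype.sum_prod_type]
  refine sum_congr rfl fun x _ => ?_
  rw [card_filter]
  refine sum_congr rfl fun y _ => if_congr ?_ rfl rfl
  by_cases hx : x = 0
  · simp [hx]
  · simp only [ne_eq, hx, not_false_eq_true, true_and]
    ring_nf

theorem four_mul_weight (a b : L) :
    4 * (weight a b : ℤ) = Fintype.card L * (Fintype.card L + 1 -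
      (if a = 0 then (if b = 0 then (Fintype.card L : ℤ) else 0) else 1) -
      (if a = 1 then 0 else traceChar L ((a + 1) * b))) := by
  have : CharP L 2 := charP_of_injective_algebraMap' (ZMod 2) 2
  rw [weight_eq_sum_card, Nat.cast_sum, mul_sum]
  simp only [four_mul_card_trace_eq_zero_and_eq_one, sum_sub_distrib, sum_add_distrib, mul_add,
    sum_const, card_univ, nsmul_eq_mul]
  set q : ℤ := (Fintype.card L : ℤ)
  have hsum_sq_add_self : ∑ x : L, (if x ^ 2 + x = 0 then q else 0) = 2 * q := by
    simp_rw [show ∀ x : L, x ^ 2 + x = x * (x + 1) by intro x; ring]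
    rw [sum_ite_mul_add_eq_zero, if_neg one_ne_zero]
    ring
  have hsum_mul : ∑ x : L, traceChar L (b * x) * (if a * x = 0 then q else 0) =
      if a = 0 then (if b = 0 then q * q else 0) else q := by
    by_cases ha : a = 0
    · simp only [ha, zero_mul, if_true, mul_comm _ q, ← mul_sum, sum_traceChar_mul]
      split_ifs <;> ring
    · simp [ha, mul_ite]
  have hsum_sq_add_self_add_mul :
      ∑ x : L, traceChar L (b * x) * (if x ^ 2 + x + a * x = 0 then q else 0) =
      q + if a = 1 then 0 else q * traceChar L ((a + 1) * b) := by
    simp_rw [show ∀ x : L, x ^ 2 + x + a * x = x * (x + (a + 1)) by intro x; ring, mul_ite,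
      mul_zero]
    rw [sum_ite_mul_add_eq_zero]
    simp [CharTwo.neg_eq, add_eq_zero_iff_eq_neg, mul_comm]
  rw [hsum_sq_add_self, hsum_mul, hsum_sq_add_self_add_mul]
  split_ifs <;> ring

end

theorem stmt14_general (m : ℕ) (hm : 2 ≤ m) (a b : GaloisField 2 m) :
    let wt : ℕ := (Finset.univ.filter (fun p : GaloisField 2 m × GaloisField 2 m =>
      p.1 ≠ 0 ∧ Tr m (p.2 * p.1 ^ 2 + p.1 * p.2) = 0 ∧
        Tr m (a * p.1 * p.2 + b * p.1) = 1)).card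
    (a ≠ 0 → a ≠ 1 → Tr m ((a + 1) * b) = 0 → wt = 2 ^ (m - 2) * (2 ^ m - 1)) ∧
    (a = 1 ∨ (a = 0 ∧ b ≠ 0 ∧ Tr m b = 0) → wt = 2 ^ (2 * m - 2)) ∧
    (a ≠ 0 → a ≠ 1 → Tr m ((a + 1) * b) = 1 → wt = 2 ^ (m - 2) * (2 ^ m + 1)) ∧
    (a = 0 → b ≠ 0 → Tr m b = 1 → wt = 2 ^ (m - 1) * (2 ^ (m - 1) + 1)) := by
  intro wt
  obtain ⟨k, rfl⟩ : ∃ k, m = k + 2 := ⟨m - 2, by omega⟩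
  have hq : (Fintype.card (GaloisField 2 (k + 2)) : ℤ) = 4 * 2 ^ k := by
    rw [Fintype.card_eq_nat_card, GaloisField.card 2 _ (by omega)]
    push_cast; ring
  have hwt : (wt : ℤ) = 2 ^ k * (4 * 2 ^ k + 1 -
      (if a = 0 then (if b = 0 then 4 * 2 ^ k else 0) else 1) -
      (if a = 1 then 0 else sgn (Tr (k + 2) ((a + 1) * b)))) := by
    refine mul_left_cancel₀ four_ne_zero ((four_mul_weight a b).trans ?_)
    rw [hq, traceChar_apply, Tr]
    ring
  simp only [Nat.add_sub_cancel, show 2 * (k + 2) - 2 = 2 * k + 2 by omega,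
    show k + 2 - 1 = k + 1 by omega]
  zify [Nat.one_le_two_pow]
  refine ⟨fun ha0 ha1 hT => ?_, ?_, fun ha0 ha1 hT => ?_, fun ha0 hb hT => ?_⟩
  · rw [hwt]
    simp only [ha0, ha1, hT, if_false, sgn_zero]
    ring
  · rintro (ha1 | ⟨ha0, hb, hT⟩) <;> rw [hwt]
    · simp only [ha1, one_ne_zero, if_true, if_false]
      ring
    · simp only [ha0, hb, if_true, if_false, zero_ne_one, zero_add, one_mul, hT, sgn_zero]
      ring
  · rw [hwt]
    simp only [ha0, ha1, hT, if_false, sgn_one]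
    ring
  · rw [hwt]
    simp only [ha0, hb, if_true, if_false, zero_ne_one, zero_add, one_mul, hT, sgn_one]
    ring

theorem stmt14 (m : ℕ) (hm : 2 ≤ m) (a b : GaloisField 2 m) (hab : (a, b) ≠ (0, 0)) :
    let wt : ℕ := (Finset.univ.filter (fun p : GaloisField 2 m × GaloisField 2 m =>
      p.1 ≠ 0 ∧ Tr m (p.2 * p.1 ^ 2 + p.1 * p.2) = 0 ∧
        Tr m (a * p.1 * p.2 + b * p.1) = 1)).card
    (a ≠ 0 → a ≠ 1 → Tr m ((a + 1) * b) = 0 → wt = 2 ^ (m - 2) * (2 ^ m - 1)) ∧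
    (a = 1 ∨ (a = 0 ∧ b ≠ 0 ∧ Tr m b = 0) → wt = 2 ^ (2 * m - 2)) ∧
    (a ≠ 0 → a ≠ 1 → Tr m ((a + 1) * b) = 1 → wt = 2 ^ (m - 2) * (2 ^ m + 1)) ∧
    (a = 0 → b ≠ 0 → Tr m b = 1 → wt = 2 ^ (m - 1) * (2 ^ (m - 1) + 1)) :=
  stmt14_general m hm a b
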